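/- Suppose a norm q on complex polynomials of one variable satisfies q ∈ ℳ*(a,m): ((M_n(q,l)/l!)^{1/l}) / ((M_n(q,k)/k!)^{1/k}) ≤ a (k/l)^m for all n ≥ 1 and 1 ≤ l ≤ k ≤ n, and that M_n(q,n) ≤ b^n n! for all n. Then q satisfies the V. Markov inequality M_n(q,l) ≤ (ab)^l n^{ml} / (l!)^{m-1} for all 1 ≤ l ≤ n. -/
import Mathlib


open Polynomial Real

/-- The Markov factor `M_n(q,l) = sup{ q(P^{(l)}) : deg P ≤ n, q(P) = 1 }`. -/
noncomputable def markovFactor (q : Polynomial ℂ → ℝ) (n l : ℕ) : ℝ :=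
  sSup {x : ℝ | ∃ P : Polynomial ℂ, P.natDegree ≤ n ∧ q P = 1 ∧
    x = q ((Polynomial.derivative)^[l] P)}

section Aux

variable (q : Polynomial ℂ → ℝ)
    (hq_add : ∀ P Q, q (P + Q) ≤ q P + q Q)
    (hq_smul : ∀ (c : ℂ) P, q (c • P) = ‖c‖ * q P)
    (hq_eq : ∀ P, q P = 0 ↔ P = 0)

include hq_add hq_smul hq_eq

lemma aux_q_nonneg (P : Polynomial ℂ) : 0 ≤ q P := by
  have h0 : q 0 = 0 := (hq_eq 0).mpr rfl
  have hneg : q (-P) = q P := by simpa using hq_smul (-1) P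
  have h := hq_add P (-P)
  rw [add_neg_cancel, h0, hneg] at h
  linarith

lemma aux_q_pos {P : Polynomial ℂ} (hP : P ≠ 0) : 0 < q P :=
  lt_of_le_of_ne (aux_q_nonneg q hq_add hq_smul hq_eq P)
    (fun h => hP ((hq_eq P).mp h.symm))

omit hq_add hq_smul hq_eq in
/-- Degree of iterated derivative doesn't increase. -/
lemma aux_deg_iter (k : ℕ) (p : Polynomial ℂ) :
    ((Polynomial.derivative)^[k] p).degree ≤ p.degree := by
  induction k generalizing p with
  | zero => simp
  | succ k ih =>
    rw [Function.iterate_succ_apply]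
    exact (ih _).trans Polynomial.degree_derivative_le

set_option synthInstance.maxHeartbeats 1000000 in
/-- The set in the definition of the Markov factor is bounded above. -/
lemma aux_bddAbove (n l : ℕ) :
    BddAbove {x : ℝ | ∃ P : Polynomial ℂ, P.natDegree ≤ n ∧ q P = 1 ∧
      x = q ((Polynomial.derivative)^[l] P)} := by
  classical
  set V := Polynomial.degreeLT ℂ (n + 1) with hV
  letI : NormedAddCommGroup V :=
    AddGroupNorm.toNormedAddCommGroup
      { toFun := fun v => q v.1
        map_zero' := (hq_eq 0).mpr rfl
        add_le' := fun v w => hq_add v.1 w.1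
        neg' := fun v => by simpa using hq_smul (-1) v.1
        eq_zero_of_map_eq_zero' := fun v hv => Subtype.ext ((hq_eq v.1).mp hv) }
  letI : NormedSpace ℂ V := { norm_smul_le := fun c v => le_of_eq (hq_smul c v.1) }
  haveI : FiniteDimensional ℂ V :=
    LinearEquiv.finiteDimensional (Polynomial.degreeLTEquiv ℂ (n + 1)).symm
  have hmem : ∀ p ∈ V, ((Polynomial.derivative :
      Polynomial ℂ →ₗ[ℂ] Polynomial ℂ) ^ l) p ∈ V := by
    intro p hp
    rw [Polynomial.mem_degreeLT] at hp ⊢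
    rw [Module.End.pow_apply]
    exact lt_of_le_of_lt (aux_deg_iter l p) hp
  let D : V →ₗ[ℂ] V :=
    ((Polynomial.derivative : Polynomial ℂ →ₗ[ℂ] Polynomial ℂ) ^ l).restrict hmem
  let T := LinearMap.toContinuousLinearMap D
  refine ⟨‖T‖, fun x hx => ?_⟩
  obtain ⟨P, hPn, hP1, rfl⟩ := hx
  have hPV : P ∈ V := by
    rw [Polynomial.mem_degreeLT]
    calc P.degree ≤ (P.natDegree : WithBot ℕ) := Polynomial.degree_le_natDegree
      _ < ((n + 1 : ℕ) : WithBot ℕ) := by exact_mod_cast Nat.lt_succ_of_le hPn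
  have hle := T.le_opNorm ⟨P, hPV⟩
  have hTv : ‖T ⟨P, hPV⟩‖ = q ((Polynomial.derivative)^[l] P) := by
    have hco : ((T ⟨P, hPV⟩ : V) : Polynomial ℂ) = (Polynomial.derivative)^[l] P := by
      show ((D ⟨P, hPV⟩ : V) : Polynomial ℂ) = _
      rw [show ((D ⟨P, hPV⟩ : V) : Polynomial ℂ) =
        ((Polynomial.derivative : Polynomial ℂ →ₗ[ℂ] Polynomial ℂ) ^ l) P from rfl]
      exact Module.End.pow_apply _ _ _
    show q ((T ⟨P, hPV⟩ : V) : Polynomial ℂ) = _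
    rw [hco]
  have hnv : ‖(⟨P, hPV⟩ : V)‖ = 1 := hP1
  rw [hTv, hnv, mul_one] at hle
  exact hle

/-- Positivity of the Markov factor. -/
lemma aux_pos (n l : ℕ) (hln : l ≤ n) : 0 < markovFactor q n l := by
  have hXn : (X ^ n : Polynomial ℂ) ≠ 0 := pow_ne_zero _ Polynomial.X_ne_zero
  have hqXn : 0 < q (X ^ n) := aux_q_pos q hq_add hq_smul hq_eq hXn
  set c : ℂ := Complex.ofReal ((q (X ^ n))⁻¹) with hc
  set P : Polynomial ℂ := c • X ^ n with hP
  have hq1 : q P = 1 := by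
    rw [hP, hq_smul, hc]
    rw [Complex.norm_real, Real.norm_eq_abs, abs_of_pos (inv_pos.mpr hqXn)]
    field_simp
  have hdeg : P.natDegree ≤ n :=
    (Polynomial.natDegree_smul_le _ _).trans (by simp [Polynomial.natDegree_X_pow])
  have hiter : (Polynomial.derivative)^[l] P = c • ((n.descFactorial l : ℂ) • X ^ (n - l)) := by
    rw [hP, Polynomial.iterate_derivative_smul, Polynomial.iterate_derivative_X_pow_eq_smul]
  have hne : ((n.descFactorial l : ℂ) • (X : Polynomial ℂ) ^ (n - l)) ≠ 0 := by
    apply smul_ne_zero _ (pow_ne_zero _ Polynomial.X_ne_zero)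
    have : n.descFactorial l ≠ 0 := by
      rw [Ne, Nat.descFactorial_eq_zero_iff_lt]
      omega
    exact_mod_cast Nat.cast_ne_zero.mpr this
  have hcne : ‖c‖ ≠ 0 := by
    rw [hc, Complex.norm_real, Real.norm_eq_abs, abs_of_pos (inv_pos.mpr hqXn)]
    exact (inv_pos.mpr hqXn).ne'
  have hxpos : 0 < q ((Polynomial.derivative)^[l] P) := by
    rw [hiter, hq_smul]
    exact mul_pos (lt_of_le_of_ne (norm_nonneg c) (Ne.symm hcne))
      (aux_q_pos q hq_add hq_smul hq_eq hne)
  refine lt_of_lt_of_le hxpos ?_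
  exact le_csSup (aux_bddAbove q hq_add hq_smul hq_eq n l) ⟨P, hdeg, hq1, rfl⟩

end Aux

/-- if `q ∈ ℳ*(a,m)`, i.e.
`(M_n(q,l)/l!)^{1/l} / (M_n(q,k)/k!)^{1/k} ≤ a (k/l)^m` for `1 ≤ l ≤ k ≤ n`, and
`M_n(q,n) ≤ b^n n!`, then `M_n(q,l) ≤ (ab)^l n^{ml} / (l!)^{m-1}` for `1 ≤ l ≤ n`. -/
theorem stmt16 (q : Polynomial ℂ → ℝ)
    (hq_add : ∀ P Q, q (P + Q) ≤ q P + q Q)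
    (hq_smul : ∀ (c : ℂ) P, q (c • P) = ‖c‖ * q P)
    (hq_eq : ∀ P, q P = 0 ↔ P = 0)
    (a m b : ℝ) (ha : 0 < a) (hm : 1 ≤ m) (hb : 0 < b)
    (hMstar : ∀ n l k : ℕ, 1 ≤ n → 1 ≤ l → l ≤ k → k ≤ n →
      ((markovFactor q n l / (Nat.factorial l : ℝ)) ^ ((1 : ℝ) / (l : ℝ))) /
          ((markovFactor q n k / (Nat.factorial k : ℝ)) ^ ((1 : ℝ) / (k : ℝ))) ≤
        a * ((k : ℝ) / (l : ℝ)) ^ m)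
    (hnn : ∀ n : ℕ, 1 ≤ n → markovFactor q n n ≤ b ^ n * (Nat.factorial n : ℝ)) :
    ∀ n l : ℕ, 1 ≤ l → l ≤ n →
      markovFactor q n l ≤
        (a * b) ^ l * (n : ℝ) ^ (m * (l : ℝ)) / (Nat.factorial l : ℝ) ^ (m - 1) := by
  intro n l hl hln
  have hn : 1 ≤ n := hl.trans hln
  have hl0 : (0 : ℝ) < l := by exact_mod_cast hl
  have hn0 : (0 : ℝ) < n := by exact_mod_cast hn
  have hfl : (0 : ℝ) < (Nat.factorial l : ℝ) := by exact_mod_cast l.factorial_pos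
  have hfn : (0 : ℝ) < (Nat.factorial n : ℝ) := by exact_mod_cast n.factorial_pos
  have hMl : 0 < markovFactor q n l := aux_pos q hq_add hq_smul hq_eq n l hln
  have hMn : 0 < markovFactor q n n := aux_pos q hq_add hq_smul hq_eq n n le_rfl
  set X : ℝ := markovFactor q n l / (Nat.factorial l : ℝ) with hXdef
  set Y : ℝ := markovFactor q n n / (Nat.factorial n : ℝ) with hYdef
  have hXpos : 0 < X := div_pos hMl hfl
  have hYpos : 0 < Y := div_pos hMn hfn
  have hYr : 0 < Y ^ ((1 : ℝ) / (n : ℝ)) := Real.rpow_pos_of_pos hYpos _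
  have key := hMstar n l n hn hl hln le_rfl
  have h1 : X ^ ((1 : ℝ) / (l : ℝ)) ≤ a * ((n : ℝ) / (l : ℝ)) ^ m * Y ^ ((1 : ℝ) / (n : ℝ)) := by
    rw [div_le_iff₀ hYr] at key
    exact key
  -- raise to the power l
  have hRHSpos : 0 < a * ((n : ℝ) / (l : ℝ)) ^ m * Y ^ ((1 : ℝ) / (n : ℝ)) :=
    mul_pos (mul_pos ha (Real.rpow_pos_of_pos (div_pos hn0 hl0) m)) hYr
  have h2 : X ≤ (a * ((n : ℝ) / (l : ℝ)) ^ m * Y ^ ((1 : ℝ) / (n : ℝ))) ^ (l : ℝ) := by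
    have h := Real.rpow_le_rpow (Real.rpow_nonneg hXpos.le _) h1 (le_of_lt hl0)
    rwa [← Real.rpow_mul hXpos.le,
      one_div, inv_mul_cancel₀ hl0.ne', Real.rpow_one] at h
  have hexp : (a * ((n : ℝ) / (l : ℝ)) ^ m * Y ^ ((1 : ℝ) / (n : ℝ))) ^ (l : ℝ) =
      a ^ (l : ℝ) * ((n : ℝ) / (l : ℝ)) ^ (m * (l : ℝ)) * Y ^ ((l : ℝ) / (n : ℝ)) := by
    rw [Real.mul_rpow (mul_pos ha (Real.rpow_pos_of_pos (div_pos hn0 hl0) m)).le hYr.le,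
      Real.mul_rpow ha.le (Real.rpow_pos_of_pos (div_pos hn0 hl0) m).le,
      ← Real.rpow_mul (div_pos hn0 hl0).le, ← Real.rpow_mul hYpos.le]
    ring_nf
  have hYb : Y ≤ b ^ (n : ℕ) := by
    rw [hYdef, div_le_iff₀ hfn]
    exact hnn n hn
  have h3 : Y ^ ((l : ℝ) / (n : ℝ)) ≤ b ^ (l : ℝ) := by
    calc Y ^ ((l : ℝ) / (n : ℝ)) ≤ (b ^ ((n : ℕ) : ℝ)) ^ ((l : ℝ) / (n : ℝ)) := by
          apply Real.rpow_le_rpow hYpos.le _ (div_nonneg hl0.le hn0.le)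
          rwa [Real.rpow_natCast]
      _ = b ^ (((n : ℕ) : ℝ) * ((l : ℝ) / (n : ℝ))) := by rw [← Real.rpow_mul hb.le]
      _ = b ^ (l : ℝ) := by
          congr 1
          field_simp
  have h4 : X ≤ a ^ (l : ℝ) * ((n : ℝ) / (l : ℝ)) ^ (m * (l : ℝ)) * b ^ (l : ℝ) := by
    calc X ≤ (a * ((n : ℝ) / (l : ℝ)) ^ m * Y ^ ((1 : ℝ) / (n : ℝ))) ^ (l : ℝ) := h2
      _ = a ^ (l : ℝ) * ((n : ℝ) / (l : ℝ)) ^ (m * (l : ℝ)) * Y ^ ((l : ℝ) / (n : ℝ)) := hexp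
      _ ≤ a ^ (l : ℝ) * ((n : ℝ) / (l : ℝ)) ^ (m * (l : ℝ)) * b ^ (l : ℝ) := by
          apply mul_le_mul_of_nonneg_left h3
          positivity
  -- expand (n/l)^{ml}
  have hdivr : ((n : ℝ) / (l : ℝ)) ^ (m * (l : ℝ)) =
      (n : ℝ) ^ (m * (l : ℝ)) / (l : ℝ) ^ (m * (l : ℝ)) :=
    Real.div_rpow hn0.le hl0.le _
  -- factorial comparison: l! * (l!)^{m-1} ≤ l^{m l}
  have h5 : (Nat.factorial l : ℝ) * (Nat.factorial l : ℝ) ^ (m - 1) ≤ (l : ℝ) ^ (m * (l : ℝ)) := by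
    have e1 : (Nat.factorial l : ℝ) * (Nat.factorial l : ℝ) ^ (m - 1) =
        (Nat.factorial l : ℝ) ^ m := by
      nth_rewrite 1 [← Real.rpow_one (Nat.factorial l : ℝ)]
      rw [← Real.rpow_add hfl]
      ring_nf
    have e2 : (Nat.factorial l : ℝ) ≤ (l : ℝ) ^ (l : ℕ) := by exact_mod_cast l.factorial_le_pow
    calc (Nat.factorial l : ℝ) * (Nat.factorial l : ℝ) ^ (m - 1) = (Nat.factorial l : ℝ) ^ m := e1
      _ ≤ ((l : ℝ) ^ (l : ℕ)) ^ m := Real.rpow_le_rpow hfl.le e2 (by linarith)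
      _ = (l : ℝ) ^ (m * (l : ℝ)) := by
          rw [← Real.rpow_natCast (l : ℝ) l, ← Real.rpow_mul hl0.le]
          ring_nf
  -- put everything together
  have hMlle : markovFactor q n l ≤
      a ^ (l : ℝ) * b ^ (l : ℝ) * (n : ℝ) ^ (m * (l : ℝ)) *
        ((Nat.factorial l : ℝ) / (l : ℝ) ^ (m * (l : ℝ))) := by
    have := mul_le_mul_of_nonneg_right h4 hfl.le
    rw [hXdef, div_mul_cancel₀ _ hfl.ne'] at this
    calc markovFactor q n l ≤
        a ^ (l : ℝ) * ((n : ℝ) / (l : ℝ)) ^ (m * (l : ℝ)) * b ^ (l : ℝ) *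
          (Nat.factorial l : ℝ) := this
      _ = a ^ (l : ℝ) * b ^ (l : ℝ) * (n : ℝ) ^ (m * (l : ℝ)) *
          ((Nat.factorial l : ℝ) / (l : ℝ) ^ (m * (l : ℝ))) := by
          rw [hdivr]; ring
  have hfrac : (Nat.factorial l : ℝ) / (l : ℝ) ^ (m * (l : ℝ)) ≤
      1 / (Nat.factorial l : ℝ) ^ (m - 1) := by
    rw [div_le_div_iff₀ (Real.rpow_pos_of_pos hl0 _) (Real.rpow_pos_of_pos hfl _)]
    calc (Nat.factorial l : ℝ) * (Nat.factorial l : ℝ) ^ (m - 1) ≤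
        (l : ℝ) ^ (m * (l : ℝ)) := h5
      _ = 1 * (l : ℝ) ^ (m * (l : ℝ)) := (one_mul _).symm
  have hab : a ^ (l : ℝ) * b ^ (l : ℝ) = (a * b) ^ l := by
    rw [← Real.mul_rpow ha.le hb.le, Real.rpow_natCast]
  calc markovFactor q n l ≤
      a ^ (l : ℝ) * b ^ (l : ℝ) * (n : ℝ) ^ (m * (l : ℝ)) *
        ((Nat.factorial l : ℝ) / (l : ℝ) ^ (m * (l : ℝ))) := hMlle
    _ ≤ a ^ (l : ℝ) * b ^ (l : ℝ) * (n : ℝ) ^ (m * (l : ℝ)) *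
        (1 / (Nat.factorial l : ℝ) ^ (m - 1)) := by
        apply mul_le_mul_of_nonneg_left hfrac
        positivity
    _ = (a * b) ^ l * (n : ℝ) ^ (m * (l : ℝ)) / (Nat.factorial l : ℝ) ^ (m - 1) := by
        rw [hab]; ring
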